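/- For every even integer L ≥ 2 and every real α > 0, the sum of α-th powers of the absolute values of all principal Pfaffian minors of the 2L×2L periodic critical XX-chain matrix equals the sum of α-th powers of the absolute values of all minors of the L×L periodic critical transverse-field Ising correlation matrix: Pf_α(R^PBC(2L)) = Det_α(G^PBC(L)). -/

import Mathlib

open scoped BigOperators Matrix

/-- The square submatrix of `A` with rows indexed by `I` and columns indexed by `J`
(both in increasing order), as a determinant; it is `0` if `I.card ≠ J.card`. -/
noncomputable def subdetR {N : ℕ} (A : Matrix (Fin N) (Fin N) ℝ) (I J : Finset (Fin N)) : ℝ :=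
  if h : J.card = I.card then
    Matrix.det (Matrix.of fun a b : Fin I.card =>
      A (I.orderEmbOfFin rfl a) (J.orderEmbOfFin h b))
  else 0

/-- `Det_β(A) = Σ_{k=0}^{N} Σ_{|I|=|J|=k} |det A[I,J]|^β`. -/
noncomputable def DetPowR {N : ℕ} (A : Matrix (Fin N) (Fin N) ℝ) (β : ℝ) : ℝ :=
  ∑ k ∈ Finset.range (N + 1),
    ∑ I ∈ Finset.univ.filter (fun I : Finset (Fin N) => I.card = k),
      ∑ J ∈ Finset.univ.filter (fun J : Finset (Fin N) => J.card = k),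
        |subdetR A I J| ^ β

/-- `Pf_β(R) = Σ_{S, |S| even} |det R[S,S]|^{β/2}`, the sum of β-th powers of the
absolute values of all principal Pfaffian minors of a skew-symmetric matrix. -/
noncomputable def PfPowR {N : ℕ} (R : Matrix (Fin N) (Fin N) ℝ) (β : ℝ) : ℝ :=
  ∑ S ∈ Finset.univ.filter (fun S : Finset (Fin N) => Even S.card),
    |subdetR R S S| ^ (β / 2)

/-- The periodic critical transverse-field Ising correlation matrix
`G^PBC_{jk} = ((-1)^{j-k}/L) csc(π(j-k+1/2)/L)`. -/
noncomputable def Gpbc (L : ℕ) : Matrix (Fin L) (Fin L) ℝ :=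
  Matrix.of fun j k =>
    (-1 : ℝ) ^ ((j : ℤ) - (k : ℤ)) / L *
      (Real.sin (Real.pi * (((j : ℝ) - (k : ℝ)) + 1 / 2) / L))⁻¹

/-- The periodic critical XX-chain matrix: antisymmetric, and for `1 ≤ j < k ≤ N`
(`j`, `k` one-based): `0` if `j+k` is even, and
`(-1)^{(j+k+1)/2} (2/N) csc(π(j-k)/N)` if `j+k` is odd. -/
noncomputable def Rpbc (N : ℕ) : Matrix (Fin N) (Fin N) ℝ :=
  Matrix.of fun j k =>
    let J : ℕ := (j : ℕ) + 1
    let K : ℕ := (k : ℕ) + 1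
    if J < K then
      (if (J + K) % 2 = 0 then 0
       else (-1 : ℝ) ^ ((J + K + 1) / 2) * (2 / N) *
         (Real.sin (Real.pi * ((J : ℝ) - (K : ℝ)) / N))⁻¹)
    else if K < J then
      -(if (K + J) % 2 = 0 then 0
        else (-1 : ℝ) ^ ((K + J + 1) / 2) * (2 / N) *
          (Real.sin (Real.pi * ((K : ℝ) - (J : ℝ)) / N))⁻¹)
    else 0

/-!
Interleave the sites of the XX chain as `2a ↔ inl a`, `2a + 1 ↔ inr a`. Since `R^PBC(2L)`
vanishes between sites of equal parity and `R^PBC_{2a+1,2b} = G^PBC_{ab}`, this reindexing turns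
`R^PBC(2L)` into the block matrix `[[0, -Gᵀ], [G, 0]]`. A principal minor on
`S = 2J ∪ (2I + 1)` is then `det [[0, -G[I,J]ᵀ], [G[I,J], 0]]`, whose absolute value is
`|det G[I,J]|²` when `|I| = |J|` and which vanishes otherwise, as the wider of the two
rectangular blocks then has a nontrivial kernel. Hence `|pf R[S,S]|^α = |det G[I,J]|^α`, and
`S ↦ (I, J)` is a bijection; odd `S` contribute nothing, as then `|I| ≠ |J|`.
-/

open Matrix

namespace Matrix

section AntiDiagonal

variable {R : Type*} [CommRing R] [LinearOrder R] [IsStrictOrderedRing R]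
  {n : Type*} [Fintype n] [DecidableEq n]

theorem abs_det_fromBlocks_zero_zero (B C : Matrix n n R) :
    |(fromBlocks 0 B C 0).det| = |B.det| * |C.det| := by
  rw [← abs_det_submatrix_equiv_equiv (Equiv.refl _) (Equiv.sumComm n n),
    Equiv.coe_refl, Equiv.sumComm_apply, fromBlocks_submatrix_sum_swap_right,
    submatrix_id_id, det_fromBlocks_zero₂₁, abs_mul]

end AntiDiagonal

section CardNe

variable {K : Type*} [Field K] {m n : Type*} [Fintype m] [Fintype n] [DecidableEq m]
  [DecidableEq n]

theorem det_fromBlocks_zero_zero_of_card_lt (B : Matrix m n K) (C : Matrix n m K)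
    (h : Fintype.card m < Fintype.card n) : (fromBlocks 0 B C 0).det = 0 := by
  obtain ⟨v, hv, hv0⟩ := Submodule.exists_mem_ne_zero_of_ne_bot
    (LinearMap.ker_ne_bot_of_finrank_lt (f := B.mulVecLin) (by simpa using h))
  refine exists_mulVec_eq_zero_iff.mp ⟨Sum.elim 0 v, fun h0 => hv0 ?_, ?_⟩
  · exact funext fun i => congrFun h0 (Sum.inr i)
  · rw [LinearMap.mem_ker, mulVecLin_apply] at hv
    simp [fromBlocks_mulVec, hv]

theorem det_fromBlocks_zero_zero_of_card_ne (B : Matrix m n K) (C : Matrix n m K)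
    (h : Fintype.card m ≠ Fintype.card n) : (fromBlocks 0 B C 0).det = 0 := by
  rcases h.lt_or_gt with h | h
  · exact det_fromBlocks_zero_zero_of_card_lt B C h
  · rw [← det_submatrix_equiv_self (Equiv.sumComm n m), Equiv.sumComm_apply,
      fromBlocks_submatrix_sum_swap_sum_swap, det_fromBlocks_zero_zero_of_card_lt C B h]

end CardNe

end Matrix

section Minors

variable {N : ℕ}

theorem subdetR_map_univ {ι : Type*} [Fintype ι] [DecidableEq ι]
    (A : Matrix (Fin N) (Fin N) ℝ) (τ : ι ↪ Fin N) :
    subdetR A (Finset.univ.map τ) (Finset.univ.map τ) = (A.submatrix τ τ).det := by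
  set S := Finset.univ.map τ
  let ρ : ι → Fin S.card := fun i => (S.orderIsoOfFin rfl).symm ⟨τ i, by simp [S]⟩
  have hρ : ∀ i, S.orderEmbOfFin rfl (ρ i) = τ i := fun i => by
    simp [ρ, ← Finset.coe_orderIsoOfFin_apply]
  have hρ_inj : Function.Injective ρ := fun i j hij => τ.injective (by rw [← hρ, hij, hρ])
  let e : ι ≃ Fin S.card := Equiv.ofBijective ρ
    ((Fintype.bijective_iff_injective_and_card ρ).mpr ⟨hρ_inj, by simp [S]⟩)
  rw [subdetR, dif_pos rfl, ← det_submatrix_equiv_self e]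
  congr 1
  ext i j
  simp [e, hρ]

theorem abs_subdetR_rpow_of_card_ne (A : Matrix (Fin N) (Fin N) ℝ) {I J : Finset (Fin N)}
    (h : J.card ≠ I.card) {β : ℝ} (hβ : β ≠ 0) : |subdetR A I J| ^ β = 0 := by
  rw [subdetR, dif_neg h, abs_zero, Real.zero_rpow hβ]

theorem DetPowR_eq_sum (A : Matrix (Fin N) (Fin N) ℝ) {β : ℝ} (hβ : β ≠ 0) :
    DetPowR A β = ∑ I, ∑ J, |subdetR A I J| ^ β := by
  calc DetPowR A β
      = ∑ k ∈ Finset.range (N + 1), ∑ I with I.card = k, ∑ J, |subdetR A I J| ^ β := by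
        refine Finset.sum_congr rfl fun k _ => Finset.sum_congr rfl fun I hI => ?_
        refine Finset.sum_filter_of_ne fun J _ hJ => ?_
        rw [Finset.mem_filter] at hI
        by_contra hk
        exact hJ (abs_subdetR_rpow_of_card_ne A (by omega) hβ)
    _ = ∑ I, ∑ J, |subdetR A I J| ^ β :=
        Finset.sum_fiberwise_of_maps_to (fun I _ => Finset.mem_range_succ_iff.mpr
          (by simpa using I.card_le_univ)) _

end Minors

section Doubling

variable {L N : ℕ} {R : Matrix (Fin N) (Fin N) ℝ} {G : Matrix (Fin L) (Fin L) ℝ}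
  {e : Fin L ⊕ Fin L ≃ Fin N}

theorem subdetR_map_disjSum_eq_det_fromBlocks (hR : R.submatrix e e = fromBlocks 0 (-Gᵀ) G 0)
    (I J : Finset (Fin L)) {k l : ℕ} (hI : I.card = k) (hJ : J.card = l) :
    subdetR R ((J.disjSum I).map e.toEmbedding) ((J.disjSum I).map e.toEmbedding) =
      (fromBlocks 0 (-(G.submatrix (I.orderEmbOfFin hI) (J.orderEmbOfFin hJ))ᵀ)
        (G.submatrix (I.orderEmbOfFin hI) (J.orderEmbOfFin hJ)) 0).det := by
  set τ := Function.Embedding.sumMap (J.orderEmbOfFin hJ).toEmbedding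
    (I.orderEmbOfFin hI).toEmbedding
  have hS : (J.disjSum I).map e.toEmbedding = Finset.univ.map (τ.trans e.toEmbedding) := by
    rw [← Finset.map_map]
    congr 1
    ext (a | b) <;> simp only [τ, Finset.mem_map, Finset.mem_univ, true_and,
      Finset.inl_mem_disjSum, Finset.inr_mem_disjSum, Function.Embedding.coe_sumMap,
      RelEmbedding.coe_toEmbedding, Sum.exists, Sum.map_inl, Sum.map_inr, Sum.inl.injEq,
      Sum.inr.injEq, reduceCtorEq, exists_false, or_false, false_or] <;>
      exact (Set.ext_iff.mp (Finset.range_orderEmbOfFin _ _) _).symm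
  rw [hS, subdetR_map_univ]
  change ((R.submatrix e e).submatrix τ τ).det = _
  rw [hR]
  congr 1
  ext (a | b) (c | d) <;> simp [τ]

theorem abs_subdetR_map_disjSum (hR : R.submatrix e e = fromBlocks 0 (-Gᵀ) G 0)
    (I J : Finset (Fin L)) :
    |subdetR R ((J.disjSum I).map e.toEmbedding) ((J.disjSum I).map e.toEmbedding)| =
      |subdetR G I J| ^ 2 := by
  by_cases h : J.card = I.card
  · rw [subdetR_map_disjSum_eq_det_fromBlocks hR I J rfl h, abs_det_fromBlocks_zero_zero,
      det_neg, det_transpose, abs_mul, abs_pow, abs_neg, abs_one, one_pow, one_mul, sq,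
      subdetR, dif_pos h]
    rfl
  · rw [subdetR_map_disjSum_eq_det_fromBlocks hR I J rfl rfl,
      det_fromBlocks_zero_zero_of_card_ne _ _ (by simpa using h), subdetR, dif_neg h]
    simp

theorem PfPowR_eq_sum_of_submatrix_eq_fromBlocks (hR : R.submatrix e e = fromBlocks 0 (-Gᵀ) G 0)
    {α : ℝ} (hα : α ≠ 0) : PfPowR R α = ∑ I, ∑ J, |subdetR G I J| ^ α := by
  let Φ : Finset (Fin L) × Finset (Fin L) ≃ Finset (Fin N) :=
    Finset.sumEquiv.symm.toEquiv.trans e.finsetCongr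
  have hΦ (p) : Φ p = (p.1.disjSum p.2).map e.toEmbedding := rfl
  have hterm (p) : |subdetR R (Φ p) (Φ p)| ^ (α / 2) = |subdetR G p.2 p.1| ^ α := by
    rw [hΦ, abs_subdetR_map_disjSum hR, ← Real.rpow_natCast, ← Real.rpow_mul (abs_nonneg _),
      Nat.cast_ofNat, mul_div_cancel₀ α two_ne_zero]
  have heven (S) (hS : |subdetR R S S| ^ (α / 2) ≠ 0) : Even S.card := by
    obtain ⟨p, rfl⟩ := Φ.surjective S
    have hcard : p.1.card = p.2.card := by
      by_contra h
      exact hS (hterm p ▸ abs_subdetR_rpow_of_card_ne G h hα)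
    rw [hΦ, Finset.card_map, Finset.card_disjSum, hcard]
    exact ⟨_, rfl⟩
  calc PfPowR R α = ∑ S, |subdetR R S S| ^ (α / 2) :=
        Finset.sum_filter_of_ne fun S _ => heven S
    _ = ∑ p, |subdetR R (Φ p) (Φ p)| ^ (α / 2) := (Φ.sum_comp _).symm
    _ = ∑ I, ∑ J, |subdetR G I J| ^ α := by
        simp only [hterm]
        exact Fintype.sum_prod_type_right _

end Doubling

theorem Rpbc_apply_of_even {N : ℕ} {j k : Fin N} (h : (j.val + k.val) % 2 = 0) :
    Rpbc N j k = 0 := by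
  simp only [Rpbc, Matrix.of_apply]
  split_ifs <;> first | (exfalso; omega) | simp

-- Valid for `j < k` and `k < j` alike since `sin` is odd; `j`, `k` are zero-based, whence the
-- `+ 3` in place of the `+ 1` of the one-based definition.
theorem Rpbc_apply_of_odd {N : ℕ} {j k : Fin N} (h : (j.val + k.val) % 2 = 1) :
    Rpbc N j k = (-1) ^ ((j.val + k.val + 3) / 2) * (2 / N) *
      (Real.sin (Real.pi * ((j : ℝ) - k) / N))⁻¹ := by
  simp only [Rpbc, Matrix.of_apply]
  push_cast
  split_ifs <;> try omega
  · rw [show (j.val + 1 + (k.val + 1) + 1) / 2 = (j.val + k.val + 3) / 2 by omega]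
    ring_nf
  · rw [show (k.val + 1 + (j.val + 1) + 1) / 2 = (j.val + k.val + 3) / 2 by omega,
      show ((k : ℝ) + 1) - (j + 1) = -((j : ℝ) - k) by ring, mul_neg, neg_div, Real.sin_neg,
      inv_neg]
    ring_nf

def parityEquiv (L : ℕ) : Fin L ⊕ Fin L ≃ Fin (2 * L) where
  toFun := Sum.elim (fun a => ⟨2 * a, by omega⟩) (fun a => ⟨2 * a + 1, by omega⟩)
  invFun x := if x.val % 2 = 0 then .inl ⟨x / 2, by omega⟩ else .inr ⟨x / 2, by omega⟩
  left_inv := by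
    rintro (a | a)
    · simp
    · simp [Fin.ext_iff]
      omega
  right_inv x := by
    dsimp only
    split_ifs <;> ext <;> simp <;> omega

theorem neg_one_zpow_natCast_sub {K : Type*} [DivisionRing K] (m n : ℕ) :
    (-1 : K) ^ ((m : ℤ) - n) = (-1) ^ (m + n) := by
  rw [zpow_natCast_sub_natCast₀ (by norm_num), div_eq_mul_inv, ← inv_pow, inv_neg, inv_one,
    pow_add]

theorem Rpbc_transpose (N : ℕ) : (Rpbc N)ᵀ = -Rpbc N := by
  ext j k
  simp only [Rpbc, transpose_apply, Matrix.neg_apply, of_apply]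
  split_ifs <;> first | (exfalso; omega) | ring

theorem Rpbc_parityEquiv_inr_inl {L : ℕ} (a b : Fin L) :
    Rpbc (2 * L) (parityEquiv L (.inr a)) (parityEquiv L (.inl b)) = Gpbc L a b := by
  have hL : (L : ℝ) ≠ 0 := Nat.cast_ne_zero.mpr a.pos.ne'
  rw [Rpbc_apply_of_odd (by simp [parityEquiv])]
  simp only [parityEquiv, Equiv.coe_fn_mk, Sum.elim_inl, Sum.elim_inr, Gpbc, of_apply]
  rw [show (2 * a.val + 1 + 2 * b.val + 3) / 2 = a.val + b.val + 2 by omega,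
    neg_one_zpow_natCast_sub]
  push_cast
  rw [show Real.pi * (2 * a + 1 - 2 * b) / (2 * L) = Real.pi * (a - b + 1 / 2) / L by
    field_simp; ring]
  ring

theorem Rpbc_submatrix_parityEquiv (L : ℕ) :
    (Rpbc (2 * L)).submatrix (parityEquiv L) (parityEquiv L) =
      fromBlocks 0 (-(Gpbc L)ᵀ) (Gpbc L) 0 := by
  ext (a | a) (b | b)
  · exact Rpbc_apply_of_even (by simp [parityEquiv])
  · rw [submatrix_apply, ← transpose_apply (Rpbc _), Rpbc_transpose, Matrix.neg_apply,
      Rpbc_parityEquiv_inr_inl]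
    rfl
  · exact Rpbc_parityEquiv_inr_inl a b
  · exact Rpbc_apply_of_even (by simp [parityEquiv]; omega)

theorem pf_det_correspondence_pbc_general (L : ℕ) :
    ∀ α : ℝ, 0 < α → PfPowR (Rpbc (2 * L)) α = DetPowR (Gpbc L) α := by
  intro α hα
  rw [PfPowR_eq_sum_of_submatrix_eq_fromBlocks (Rpbc_submatrix_parityEquiv L) hα.ne',
    DetPowR_eq_sum _ hα.ne']

/-- **Stabilizer–Shannon correspondence, periodic case.**  For every even
`L ≥ 2` and every real `α > 0`,
`Pf_α(R^PBC(2L)) = Det_α(G^PBC(L))`. -/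
theorem pf_det_correspondence_pbc (L : ℕ) (hL : Even L) (hL2 : 2 ≤ L) :
    ∀ α : ℝ, 0 < α → PfPowR (Rpbc (2 * L)) α = DetPowR (Gpbc L) α :=
  pf_det_correspondence_pbc_general L
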